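/- If A is a real m×m matrix with (1/8)‖N‖ ≤ ‖T_0(N)‖ for the map T_0 built from matrices I, J orthogonal at a point, then for matrices I(x), J(x) sufficiently close (in operator norm) to I, J, the map T_x(N) = (1/8)(N + I(x)ᵀNI(x) + J(x)ᵀNJ(x) + J(x)ᵀI(x)ᵀNI(x)J(x)) satisfies (1/16)‖N‖ ≤ ‖T_x(N)‖ ≤ ‖N‖ for all positive semidefinite symmetric N. -/

import Mathlib

open Matrix

/-- `‖A‖ = sup_{‖v‖ = 1} ⟨A v, v⟩` for a real matrix `A`. -/
noncomputable def quadNorm (m : ℕ) (A : Matrix (Fin m) (Fin m) ℝ) : ℝ :=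
  sSup {x : ℝ | ∃ v : Fin m → ℝ, (∑ i, v i ^ 2) = 1 ∧ x = v ⬝ᵥ A.mulVec v}

/-- The ℓ²-operator norm of a real matrix. -/
noncomputable def opNorm (m : ℕ) (A : Matrix (Fin m) (Fin m) ℝ) : ℝ :=
  sSup {x : ℝ | ∃ v : Fin m → ℝ, (∑ i, v i ^ 2) = 1 ∧
    x = Real.sqrt (∑ i, (A.mulVec v) i ^ 2)}

/-- The map `T` built from the matrices `I, J`:
`T(N) = (1/8)(N + IᵀNI + JᵀNJ + JᵀIᵀNIJ)`. -/
noncomputable def Tmap (m : ℕ) (I J N : Matrix (Fin m) (Fin m) ℝ) :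
    Matrix (Fin m) (Fin m) ℝ :=
  ((1 : ℝ) / 8) • (N + Iᵀ * N * I + Jᵀ * N * J + Jᵀ * Iᵀ * N * I * J)

namespace TmapAux

variable {m : ℕ}

/-- Euclidean norm of a vector. -/
noncomputable def env (v : Fin m → ℝ) : ℝ := Real.sqrt (∑ i, v i ^ 2)

lemma env_nonneg (v : Fin m → ℝ) : 0 ≤ env v := Real.sqrt_nonneg _

lemma env_sq (v : Fin m → ℝ) : env v ^ 2 = ∑ i, v i ^ 2 :=
  Real.sq_sqrt (Finset.sum_nonneg fun i _ => sq_nonneg _)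

lemma env_eq_norm (v : Fin m → ℝ) :
    env v = ‖(WithLp.equiv 2 (Fin m → ℝ)).symm v‖ := by
  rw [EuclideanSpace.norm_eq]
  unfold env
  congr 1
  apply Finset.sum_congr rfl
  intro i _
  rw [WithLp.equiv_symm_apply, PiLp.toLp_apply, Real.norm_eq_abs, sq_abs]

lemma env_add_le (a b : Fin m → ℝ) : env (a + b) ≤ env a + env b := by
  rw [env_eq_norm, env_eq_norm, env_eq_norm]
  exact norm_add_le ((WithLp.equiv 2 (Fin m → ℝ)).symm a)
    ((WithLp.equiv 2 (Fin m → ℝ)).symm b)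

lemma env_smul (c : ℝ) (v : Fin m → ℝ) : env (c • v) = |c| * env v := by
  rw [env_eq_norm, env_eq_norm]
  rw [show (WithLp.equiv 2 (Fin m → ℝ)).symm (c • v)
      = c • (WithLp.equiv 2 (Fin m → ℝ)).symm v from rfl]
  rw [norm_smul, Real.norm_eq_abs]

lemma env_le_add_sub (a b : Fin m → ℝ) : env a ≤ env b + env (a - b) := by
  have h : a = b + (a - b) := by ring
  calc env a = env (b + (a - b)) := by rw [← h]
    _ ≤ env b + env (a - b) := env_add_le _ _

lemma env_neg (a : Fin m → ℝ) : env (-a) = env a := by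
  unfold env
  congr 1
  apply Finset.sum_congr rfl
  intro i _
  simp

lemma env_sub_comm (a b : Fin m → ℝ) : env (a - b) = env (b - a) := by
  rw [show a - b = -(b - a) by ring, env_neg]

lemma env_sub_triple (a b c : Fin m → ℝ) : env (a - c) ≤ env (a - b) + env (b - c) := by
  rw [show a - c = (a - b) + (b - c) by ring]
  exact env_add_le _ _

lemma env_eq_zero {v : Fin m → ℝ} (h : env v = 0) : v = 0 := by
  have hs : (∑ i, v i ^ 2) = 0 :=
    le_antisymm (Real.sqrt_eq_zero'.mp h) (Finset.sum_nonneg fun i _ => sq_nonneg _)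
  funext i
  have := (Finset.sum_eq_zero_iff_of_nonneg (fun i _ => sq_nonneg (v i))).mp hs i
    (Finset.mem_univ i)
  exact pow_eq_zero_iff (by norm_num) |>.mp this

lemma env_unit {v : Fin m → ℝ} (hv : (∑ i, v i ^ 2) = 1) : env v = 1 := by
  rw [env, hv, Real.sqrt_one]

/-- The quadratic-form set is bounded above. -/
lemma quad_bddAbove (N : Matrix (Fin m) (Fin m) ℝ) :
    BddAbove {x : ℝ | ∃ v : Fin m → ℝ, (∑ i, v i ^ 2) = 1 ∧ x = v ⬝ᵥ N.mulVec v} := by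
  refine ⟨∑ i, ∑ j, |N i j|, ?_⟩
  rintro x ⟨v, hv, rfl⟩
  have hvb : ∀ i, |v i| ≤ 1 := by
    intro i
    have h1 : v i ^ 2 ≤ 1 := hv ▸ Finset.single_le_sum
      (f := fun i => v i ^ 2) (fun i _ => sq_nonneg _) (Finset.mem_univ i)
    nlinarith [abs_nonneg (v i), sq_abs (v i)]
  calc v ⬝ᵥ N.mulVec v = ∑ i, ∑ j, v i * (N i j * v j) := by
        simp [dotProduct, Matrix.mulVec, Finset.mul_sum]
    _ ≤ ∑ i, ∑ j, |N i j| := by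
        refine Finset.sum_le_sum fun i _ => Finset.sum_le_sum fun j _ => ?_
        calc v i * (N i j * v j) ≤ |v i * (N i j * v j)| := le_abs_self _
          _ = |v i| * |N i j| * |v j| := by rw [abs_mul, abs_mul]; ring
          _ ≤ 1 * |N i j| * 1 := by
              apply mul_le_mul (mul_le_mul (hvb i) le_rfl (abs_nonneg _) zero_le_one)
                (hvb j) (abs_nonneg _)
              positivity
          _ = |N i j| := by ring

lemma le_quadNorm (N : Matrix (Fin m) (Fin m) ℝ) {v : Fin m → ℝ}
    (hv : (∑ i, v i ^ 2) = 1) : v ⬝ᵥ N.mulVec v ≤ quadNorm m N :=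
  le_csSup (quad_bddAbove N) ⟨v, hv, rfl⟩

lemma exists_unit (hm : 0 < m) : ∃ v : Fin m → ℝ, (∑ i, v i ^ 2) = 1 := by
  refine ⟨fun i => if i = ⟨0, hm⟩ then 1 else 0, ?_⟩
  rw [Finset.sum_eq_single ⟨0, hm⟩]
  · simp
  · intro b _ hb; simp [hb]
  · intro h; exact absurd (Finset.mem_univ _) h

lemma quadNorm_le (hm : 0 < m) (N : Matrix (Fin m) (Fin m) ℝ) {c : ℝ}
    (h : ∀ v : Fin m → ℝ, (∑ i, v i ^ 2) = 1 → v ⬝ᵥ N.mulVec v ≤ c) :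
    quadNorm m N ≤ c := by
  apply csSup_le
  · obtain ⟨v, hv⟩ := exists_unit hm
    exact ⟨v ⬝ᵥ N.mulVec v, v, hv, rfl⟩
  · rintro x ⟨v, hv, rfl⟩; exact h v hv

lemma quad_nonneg {N : Matrix (Fin m) (Fin m) ℝ} (hN : N.PosSemidef)
    (u : Fin m → ℝ) : 0 ≤ u ⬝ᵥ N.mulVec u := by
  simpa using hN.dotProduct_mulVec_nonneg u

lemma quadNorm_nonneg (hm : 0 < m) {N : Matrix (Fin m) (Fin m) ℝ}
    (hN : N.PosSemidef) : 0 ≤ quadNorm m N := by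
  obtain ⟨v, hv⟩ := exists_unit hm
  exact le_trans (quad_nonneg hN v) (le_quadNorm N hv)

/-- Scaled upper bound of the quadratic form. -/
lemma quad_le_mul (hm : 0 < m) {N : Matrix (Fin m) (Fin m) ℝ} (hN : N.PosSemidef)
    (u : Fin m → ℝ) : u ⬝ᵥ N.mulVec u ≤ quadNorm m N * env u ^ 2 := by
  rcases eq_or_lt_of_le (env_nonneg u) with h0 | h0
  · have hu : u = 0 := env_eq_zero h0.symm
    subst hu
    simp [← h0]
  · set c : ℝ := env u with hc
    have hcs : c ^ 2 = ∑ i, u i ^ 2 := env_sq u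
    have hunit : (∑ i, (c⁻¹ • u) i ^ 2) = 1 := by
      have : ∀ i, (c⁻¹ • u) i ^ 2 = c⁻¹ ^ 2 * u i ^ 2 := by
        intro i; simp [Pi.smul_apply, mul_pow]
      rw [Finset.sum_congr rfl fun i _ => this i, ← Finset.mul_sum, ← hcs]
      field_simp
    have key := le_quadNorm N hunit
    have hexp : (c⁻¹ • u) ⬝ᵥ N.mulVec (c⁻¹ • u) = c⁻¹ ^ 2 * (u ⬝ᵥ N.mulVec u) := by
      rw [Matrix.mulVec_smul, smul_dotProduct, dotProduct_smul]
      simp [smul_eq_mul]; ring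
    rw [hexp] at key
    have : u ⬝ᵥ N.mulVec u ≤ quadNorm m N * c ^ 2 := by
      have hc2 : (0:ℝ) < c ^ 2 := by positivity
      calc u ⬝ᵥ N.mulVec u = c ^ 2 * (c⁻¹ ^ 2 * (u ⬝ᵥ N.mulVec u)) := by
            field_simp
        _ ≤ c ^ 2 * quadNorm m N := by
            exact mul_le_mul_of_nonneg_left key (le_of_lt hc2)
        _ = quadNorm m N * c ^ 2 := by ring
    exact this

lemma bilin_symm {N : Matrix (Fin m) (Fin m) ℝ} (hNs : Nᵀ = N)
    (x y : Fin m → ℝ) : x ⬝ᵥ N.mulVec y = y ⬝ᵥ N.mulVec x := by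
  rw [Matrix.dotProduct_mulVec, ← Matrix.mulVec_transpose, hNs,
    dotProduct_comm]

lemma quad_sub_eq {N : Matrix (Fin m) (Fin m) ℝ} (hNs : Nᵀ = N)
    (u w : Fin m → ℝ) :
    u ⬝ᵥ N.mulVec u - w ⬝ᵥ N.mulVec w = (u - w) ⬝ᵥ N.mulVec (u + w) := by
  rw [sub_dotProduct, Matrix.mulVec_add, dotProduct_add,
    dotProduct_add]
  have := bilin_symm hNs u w
  linarith [this]

/-- Cauchy–Schwarz for the positive semidefinite bilinear form. -/
lemma bilin_le (hm : 0 < m) {N : Matrix (Fin m) (Fin m) ℝ} (hN : N.PosSemidef)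
    (x y : Fin m → ℝ) :
    |x ⬝ᵥ N.mulVec y| ≤ quadNorm m N * env x * env y := by
  have hNs : Nᵀ = N := by
    rw [← Matrix.conjTranspose_eq_transpose_of_trivial]; exact hN.1
  have hq : ∀ t : ℝ, 0 ≤ (y ⬝ᵥ N.mulVec y) * (t * t)
      + (2 * (x ⬝ᵥ N.mulVec y)) * t + x ⬝ᵥ N.mulVec x := by
    intro t
    have h := quad_nonneg hN (x + t • y)
    have hexp : (x + t • y) ⬝ᵥ N.mulVec (x + t • y)
        = (y ⬝ᵥ N.mulVec y) * (t * t) + (2 * (x ⬝ᵥ N.mulVec y)) * t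
          + x ⬝ᵥ N.mulVec x := by
      have hsy := bilin_symm hNs x y
      simp only [Matrix.mulVec_add, Matrix.mulVec_smul, add_dotProduct,
        dotProduct_add, smul_dotProduct, dotProduct_smul,
        smul_eq_mul]
      linear_combination (-t) * hsy
    linarith [hexp ▸ h]
  have hdisc := discrim_le_zero hq
  rw [discrim] at hdisc
  have hB2 : (x ⬝ᵥ N.mulVec y) ^ 2 ≤ (x ⬝ᵥ N.mulVec x) * (y ⬝ᵥ N.mulVec y) := by
    nlinarith [hdisc]
  have hqx := quad_le_mul hm hN x
  have hqy := quad_le_mul hm hN y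
  have hqx0 := quad_nonneg hN x
  have hqy0 := quad_nonneg hN y
  have hΛ := quadNorm_nonneg hm hN
  have hC : (0:ℝ) ≤ quadNorm m N * env x * env y := by
    have := env_nonneg x; have := env_nonneg y; positivity
  have hsq : (x ⬝ᵥ N.mulVec y) ^ 2 ≤ (quadNorm m N * env x * env y) ^ 2 := by
    have hx := env_nonneg x
    have hy := env_nonneg y
    nlinarith [hB2, hqx, hqy, hqx0, hqy0, mul_nonneg hΛ (mul_nonneg (sq_nonneg (env x)) (sq_nonneg (env y)))]
  calc |x ⬝ᵥ N.mulVec y| = Real.sqrt ((x ⬝ᵥ N.mulVec y) ^ 2) := by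
        rw [Real.sqrt_sq_eq_abs]
    _ ≤ Real.sqrt ((quadNorm m N * env x * env y) ^ 2) := Real.sqrt_le_sqrt hsq
    _ = quadNorm m N * env x * env y := Real.sqrt_sq hC

/-- Operator norm bound on `A *ᵥ v`. -/
lemma op_bddAbove (A : Matrix (Fin m) (Fin m) ℝ) :
    BddAbove {x : ℝ | ∃ v : Fin m → ℝ, (∑ i, v i ^ 2) = 1 ∧
      x = Real.sqrt (∑ i, (A.mulVec v) i ^ 2)} := by
  refine ⟨Real.sqrt (∑ i, ∑ j, A i j ^ 2), ?_⟩
  rintro x ⟨v, hv, rfl⟩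
  apply Real.sqrt_le_sqrt
  refine Finset.sum_le_sum fun i _ => ?_
  have h := Finset.sum_mul_sq_le_sq_mul_sq Finset.univ (fun j => A i j) v
  calc (A.mulVec v) i ^ 2 = (∑ j, A i j * v j) ^ 2 := by
        simp [Matrix.mulVec, dotProduct]
    _ ≤ (∑ j, A i j ^ 2) * (∑ j, v j ^ 2) := h
    _ = ∑ j, A i j ^ 2 := by rw [hv, mul_one]

lemma env_mulVec_le (A : Matrix (Fin m) (Fin m) ℝ) (v : Fin m → ℝ) :
    env (A.mulVec v) ≤ opNorm m A * env v := by
  rcases eq_or_lt_of_le (env_nonneg v) with h0 | h0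
  · have hv : v = 0 := env_eq_zero h0.symm
    subst hv
    simp [Matrix.mulVec_zero, ← h0, env]
  · set c : ℝ := env v with hc
    have hcs : c ^ 2 = ∑ i, v i ^ 2 := env_sq v
    have hunit : (∑ i, (c⁻¹ • v) i ^ 2) = 1 := by
      have : ∀ i, (c⁻¹ • v) i ^ 2 = c⁻¹ ^ 2 * v i ^ 2 := by
        intro i; simp [Pi.smul_apply, mul_pow]
      rw [Finset.sum_congr rfl fun i _ => this i, ← Finset.mul_sum, ← hcs]
      field_simp
    have key : Real.sqrt (∑ i, (A.mulVec (c⁻¹ • v)) i ^ 2) ≤ opNorm m A :=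
      le_csSup (op_bddAbove A) ⟨c⁻¹ • v, hunit, rfl⟩
    have henv : env (A.mulVec (c⁻¹ • v)) = c⁻¹ * env (A.mulVec v) := by
      rw [Matrix.mulVec_smul]
      have := env_smul c⁻¹ (A.mulVec v)
      rw [abs_of_pos (inv_pos.mpr h0)] at this
      exact this
    have : c⁻¹ * env (A.mulVec v) ≤ opNorm m A := by
      rw [← henv]; exact key
    calc env (A.mulVec v) = c * (c⁻¹ * env (A.mulVec v)) := by
          field_simp
      _ ≤ c * opNorm m A := mul_le_mul_of_nonneg_left this (le_of_lt h0)
      _ = opNorm m A * c := by ring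

lemma env_orth {I : Matrix (Fin m) (Fin m) ℝ} (hI : Iᵀ * I = 1)
    (v : Fin m → ℝ) : env (I.mulVec v) = env v := by
  unfold env
  congr 1
  have h : ∀ w : Fin m → ℝ, (∑ i, w i ^ 2) = w ⬝ᵥ w := by
    intro w; simp [dotProduct, sq]
  rw [h, h]
  calc I.mulVec v ⬝ᵥ I.mulVec v = (v ᵥ* Iᵀ) ⬝ᵥ I.mulVec v := by
        rw [Matrix.vecMul_transpose]
    _ = v ⬝ᵥ Iᵀ.mulVec (I.mulVec v) := (Matrix.dotProduct_mulVec v Iᵀ (I.mulVec v)).symm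
    _ = v ⬝ᵥ (Iᵀ * I).mulVec v := by rw [Matrix.mulVec_mulVec]
    _ = v ⬝ᵥ v := by rw [hI, Matrix.one_mulVec]

lemma conj_quad (A N : Matrix (Fin m) (Fin m) ℝ) (v : Fin m → ℝ) :
    v ⬝ᵥ (Aᵀ * N * A).mulVec v = (A.mulVec v) ⬝ᵥ N.mulVec (A.mulVec v) := by
  rw [Matrix.mul_assoc, ← Matrix.mulVec_mulVec,
    ← Matrix.mulVec_mulVec, Matrix.dotProduct_mulVec (A := Aᵀ),
    Matrix.vecMul_transpose]

lemma Tmap_quad (A B N : Matrix (Fin m) (Fin m) ℝ) (v : Fin m → ℝ) :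
    v ⬝ᵥ (Tmap m A B N).mulVec v =
      (1 / 8 : ℝ) * (v ⬝ᵥ N.mulVec v
        + (A.mulVec v) ⬝ᵥ N.mulVec (A.mulVec v)
        + (B.mulVec v) ⬝ᵥ N.mulVec (B.mulVec v)
        + (A.mulVec (B.mulVec v)) ⬝ᵥ N.mulVec (A.mulVec (B.mulVec v))) := by
  unfold Tmap
  rw [Matrix.smul_mulVec, dotProduct_smul]
  rw [Matrix.add_mulVec, Matrix.add_mulVec, Matrix.add_mulVec,
    dotProduct_add, dotProduct_add, dotProduct_add]
  have h4 : Bᵀ * Aᵀ * N * A * B = (A * B)ᵀ * N * (A * B) := by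
    rw [Matrix.transpose_mul, Matrix.mul_assoc]
  rw [h4, conj_quad A N v, conj_quad B N v, conj_quad (A * B) N v,
    ← Matrix.mulVec_mulVec]
  simp [smul_eq_mul]

end TmapAux

open TmapAux

/-- Stability of the two-sided norm bound for `T` under small perturbations:
if `T₀` (built from orthogonal `I, J`) satisfies `(1/8)‖N‖ ≤ ‖T₀(N)‖` for all
positive semidefinite symmetric `N`, and `I(x), J(x)` are sufficiently close to
`I, J` in operator norm, then `(1/16)‖N‖ ≤ ‖T_x(N)‖ ≤ ‖N‖` for all such `N`. -/
theorem Tmap_norm_bounds_perturbed (m : ℕ) (hm : 0 < m)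
    (I J Ix Jx : Matrix (Fin m) (Fin m) ℝ)
    (hI : Iᵀ * I = 1) (hJ : Jᵀ * J = 1)
    (hT0 : ∀ N : Matrix (Fin m) (Fin m) ℝ, N.PosSemidef →
      (1 / 8 : ℝ) * quadNorm m N ≤ quadNorm m (Tmap m I J N))
    (hIx : opNorm m (Ix - I) < 1 / 100)
    (hJx : opNorm m (Jx - J) < 1 / 100) :
    ∀ N : Matrix (Fin m) (Fin m) ℝ, N.PosSemidef →
      (1 / 16 : ℝ) * quadNorm m N ≤ quadNorm m (Tmap m Ix Jx N) ∧
      quadNorm m (Tmap m Ix Jx N) ≤ quadNorm m N := by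
  intro N hN
  set Λ := quadNorm m N with hΛdef
  have hΛ : 0 ≤ Λ := quadNorm_nonneg hm hN
  have hNs : Nᵀ = N := by
    rw [← Matrix.conjTranspose_eq_transpose_of_trivial]; exact hN.1
  -- basic perturbation estimates
  have hIdiff : ∀ w : Fin m → ℝ, env (Ix.mulVec w - I.mulVec w) ≤ (1/100) * env w := by
    intro w
    rw [← Matrix.sub_mulVec]
    calc env ((Ix - I).mulVec w) ≤ opNorm m (Ix - I) * env w := env_mulVec_le _ _
      _ ≤ (1/100) * env w := mul_le_mul_of_nonneg_right (le_of_lt hIx) (env_nonneg w)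
  have hJdiff : ∀ w : Fin m → ℝ, env (Jx.mulVec w - J.mulVec w) ≤ (1/100) * env w := by
    intro w
    rw [← Matrix.sub_mulVec]
    calc env ((Jx - J).mulVec w) ≤ opNorm m (Jx - J) * env w := env_mulVec_le _ _
      _ ≤ (1/100) * env w := mul_le_mul_of_nonneg_right (le_of_lt hJx) (env_nonneg w)
  have hIxB : ∀ w : Fin m → ℝ, env (Ix.mulVec w) ≤ (101/100) * env w := by
    intro w
    calc env (Ix.mulVec w) ≤ env (I.mulVec w) + env (Ix.mulVec w - I.mulVec w) :=
          env_le_add_sub _ _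
      _ ≤ env w + (1/100) * env w := add_le_add (le_of_eq (env_orth hI w)) (hIdiff w)
      _ = (101/100) * env w := by ring
  have hJxB : ∀ w : Fin m → ℝ, env (Jx.mulVec w) ≤ (101/100) * env w := by
    intro w
    calc env (Jx.mulVec w) ≤ env (J.mulVec w) + env (Jx.mulVec w - J.mulVec w) :=
          env_le_add_sub _ _
      _ ≤ env w + (1/100) * env w := add_le_add (le_of_eq (env_orth hJ w)) (hJdiff w)
      _ = (101/100) * env w := by ring
  constructor
  · -- lower bound
    have key : quadNorm m (Tmap m I J N) ≤ quadNorm m (Tmap m Ix Jx N) + (15/800) * Λ := by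
      apply quadNorm_le hm
      intro v hv
      have hv1 : env v = 1 := env_unit hv
      set u1 := I.mulVec v with hu1d
      set w1 := Ix.mulVec v with hw1d
      set u2 := J.mulVec v with hu2d
      set w2 := Jx.mulVec v with hw2d
      set u3 := I.mulVec (J.mulVec v) with hu3d
      set w3 := Ix.mulVec (Jx.mulVec v) with hw3d
      have hu1 : env u1 = 1 := by rw [hu1d, env_orth hI, hv1]
      have hu2 : env u2 = 1 := by rw [hu2d, env_orth hJ, hv1]
      have hu3 : env u3 = 1 := by rw [hu3d, env_orth hI, env_orth hJ, hv1]
      have hw1 : env w1 ≤ 101/100 := by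
        have := hIxB v; rw [hv1, mul_one] at this; exact this
      have hw2 : env w2 ≤ 101/100 := by
        have := hJxB v; rw [hv1, mul_one] at this; exact this
      have hw3 : env w3 ≤ (101/100)^2 := by
        rw [hw3d]
        calc env (Ix.mulVec (Jx.mulVec v)) ≤ (101/100) * env (Jx.mulVec v) := hIxB _
          _ ≤ (101/100) * (101/100) := by
              apply mul_le_mul_of_nonneg_left hw2; norm_num
          _ = (101/100)^2 := by ring
      have hd1 : env (u1 - w1) ≤ 1/100 := by
        rw [env_sub_comm]
        have h := hIdiff v
        rw [hv1, mul_one] at h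
        exact h
      have hd2 : env (u2 - w2) ≤ 1/100 := by
        rw [env_sub_comm]
        have h := hJdiff v
        rw [hv1, mul_one] at h
        exact h
      have hd3 : env (u3 - w3) ≤ 3/100 := by
        have ha : env (u3 - I.mulVec (Jx.mulVec v)) ≤ 1/100 := by
          have he : u3 - I.mulVec (Jx.mulVec v) = I.mulVec (J.mulVec v - Jx.mulVec v) := by
            rw [Matrix.mulVec_sub]
          rw [he, env_orth hI, env_sub_comm]
          have h := hJdiff v
          rw [hv1, mul_one] at h
          exact h
        have hb : env (I.mulVec (Jx.mulVec v) - w3) ≤ 101/10000 := by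
          rw [env_sub_comm, hw3d]
          calc env (Ix.mulVec (Jx.mulVec v) - I.mulVec (Jx.mulVec v))
              ≤ 1/100 * env (Jx.mulVec v) := hIdiff _
            _ ≤ 1/100 * (101/100) := by
                apply mul_le_mul_of_nonneg_left hw2; norm_num
            _ = 101/10000 := by norm_num
        calc env (u3 - w3)
            ≤ env (u3 - I.mulVec (Jx.mulVec v)) + env (I.mulVec (Jx.mulVec v) - w3) :=
              env_sub_triple _ _ _
          _ ≤ 1/100 + 101/10000 := add_le_add ha hb
          _ ≤ 3/100 := by norm_num
      -- per-term quadratic form differences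
      have hq1 : u1 ⬝ᵥ N.mulVec u1 - w1 ⬝ᵥ N.mulVec w1 ≤ Λ * (3/100) := by
        rw [quad_sub_eq hNs]
        have hs : env (u1 + w1) ≤ 3 := by
          calc env (u1 + w1) ≤ env u1 + env w1 := env_add_le _ _
            _ ≤ 1 + 101/100 := by rw [hu1]; exact add_le_add le_rfl hw1
            _ ≤ 3 := by norm_num
        calc (u1 - w1) ⬝ᵥ N.mulVec (u1 + w1)
            ≤ |(u1 - w1) ⬝ᵥ N.mulVec (u1 + w1)| := le_abs_self _
          _ ≤ Λ * env (u1 - w1) * env (u1 + w1) := bilin_le hm hN _ _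
          _ ≤ Λ * (1/100) * env (u1 + w1) := by
              apply mul_le_mul_of_nonneg_right _ (env_nonneg _)
              exact mul_le_mul_of_nonneg_left hd1 hΛ
          _ ≤ Λ * (1/100) * 3 := by
              apply mul_le_mul_of_nonneg_left hs; positivity
          _ = Λ * (3/100) := by ring
      have hq2 : u2 ⬝ᵥ N.mulVec u2 - w2 ⬝ᵥ N.mulVec w2 ≤ Λ * (3/100) := by
        rw [quad_sub_eq hNs]
        have hs : env (u2 + w2) ≤ 3 := by
          calc env (u2 + w2) ≤ env u2 + env w2 := env_add_le _ _
            _ ≤ 1 + 101/100 := by rw [hu2]; exact add_le_add le_rfl hw2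
            _ ≤ 3 := by norm_num
        calc (u2 - w2) ⬝ᵥ N.mulVec (u2 + w2)
            ≤ |(u2 - w2) ⬝ᵥ N.mulVec (u2 + w2)| := le_abs_self _
          _ ≤ Λ * env (u2 - w2) * env (u2 + w2) := bilin_le hm hN _ _
          _ ≤ Λ * (1/100) * env (u2 + w2) := by
              apply mul_le_mul_of_nonneg_right _ (env_nonneg _)
              exact mul_le_mul_of_nonneg_left hd2 hΛ
          _ ≤ Λ * (1/100) * 3 := by
              apply mul_le_mul_of_nonneg_left hs; positivity
          _ = Λ * (3/100) := by ring
      have hq3 : u3 ⬝ᵥ N.mulVec u3 - w3 ⬝ᵥ N.mulVec w3 ≤ Λ * (9/100) := by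
        rw [quad_sub_eq hNs]
        have hs : env (u3 + w3) ≤ 3 := by
          calc env (u3 + w3) ≤ env u3 + env w3 := env_add_le _ _
            _ ≤ 1 + (101/100)^2 := by rw [hu3]; exact add_le_add le_rfl hw3
            _ ≤ 3 := by norm_num
        calc (u3 - w3) ⬝ᵥ N.mulVec (u3 + w3)
            ≤ |(u3 - w3) ⬝ᵥ N.mulVec (u3 + w3)| := le_abs_self _
          _ ≤ Λ * env (u3 - w3) * env (u3 + w3) := bilin_le hm hN _ _
          _ ≤ Λ * (3/100) * env (u3 + w3) := by
              apply mul_le_mul_of_nonneg_right _ (env_nonneg _)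
              exact mul_le_mul_of_nonneg_left hd3 hΛ
          _ ≤ Λ * (3/100) * 3 := by
              apply mul_le_mul_of_nonneg_left hs; positivity
          _ = Λ * (9/100) := by ring
      have hexpx := Tmap_quad Ix Jx N v
      have hx_le : v ⬝ᵥ (Tmap m Ix Jx N).mulVec v ≤ quadNorm m (Tmap m Ix Jx N) :=
        le_quadNorm _ hv
      rw [hexpx] at hx_le
      rw [Tmap_quad I J N v]
      linarith [hq1, hq2, hq3, hx_le]
    have h0 := hT0 N hN
    linarith [key, h0, hΛ]
  · -- upper bound
    apply quadNorm_le hm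
    intro v hv
    have hv1 : env v = 1 := env_unit hv
    rw [Tmap_quad]
    have h0 : v ⬝ᵥ N.mulVec v ≤ Λ := le_quadNorm N hv
    have h1 : (Ix.mulVec v) ⬝ᵥ N.mulVec (Ix.mulVec v) ≤ Λ * (101/100)^2 := by
      calc (Ix.mulVec v) ⬝ᵥ N.mulVec (Ix.mulVec v) ≤ Λ * env (Ix.mulVec v) ^ 2 :=
            quad_le_mul hm hN _
        _ ≤ Λ * (101/100)^2 := by
            apply mul_le_mul_of_nonneg_left _ hΛ
            have := hIxB v; rw [hv1, mul_one] at this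
            exact pow_le_pow_left₀ (env_nonneg _) this 2
    have h2 : (Jx.mulVec v) ⬝ᵥ N.mulVec (Jx.mulVec v) ≤ Λ * (101/100)^2 := by
      calc (Jx.mulVec v) ⬝ᵥ N.mulVec (Jx.mulVec v) ≤ Λ * env (Jx.mulVec v) ^ 2 :=
            quad_le_mul hm hN _
        _ ≤ Λ * (101/100)^2 := by
            apply mul_le_mul_of_nonneg_left _ hΛ
            have := hJxB v; rw [hv1, mul_one] at this
            exact pow_le_pow_left₀ (env_nonneg _) this 2
    have h3 : (Ix.mulVec (Jx.mulVec v)) ⬝ᵥ N.mulVec (Ix.mulVec (Jx.mulVec v))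
        ≤ Λ * ((101/100)^2)^2 := by
      calc (Ix.mulVec (Jx.mulVec v)) ⬝ᵥ N.mulVec (Ix.mulVec (Jx.mulVec v))
          ≤ Λ * env (Ix.mulVec (Jx.mulVec v)) ^ 2 := quad_le_mul hm hN _
        _ ≤ Λ * ((101/100)^2)^2 := by
            apply mul_le_mul_of_nonneg_left _ hΛ
            have hb : env (Ix.mulVec (Jx.mulVec v)) ≤ (101/100)^2 := by
              calc env (Ix.mulVec (Jx.mulVec v)) ≤ (101/100) * env (Jx.mulVec v) := hIxB _
                _ ≤ (101/100) * (101/100) := by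
                    have := hJxB v; rw [hv1, mul_one] at this
                    apply mul_le_mul_of_nonneg_left this; norm_num
                _ = (101/100)^2 := by ring
            exact pow_le_pow_left₀ (env_nonneg _) hb 2
    nlinarith [h0, h1, h2, h3, hΛ]
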